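/- If H is a connected graph containing two pendant paths P_1 (from u' to u) and P_2 (from v' to v) each of length k + 1, where u' and v' have degree 1 in H and all internal vertices of P_1, P_2 have degree 2 in H, and H is k-contractible to a path P, then the witness sets containing u' and v' correspond to the two endvertices of P. -/

import Mathlib

open SimpleGraph

/-- Contraction of the edge `uv` in `G`: remove `v`, attaching its former
neighbours to `u`. -/
def SimpleGraph.contractEdge {V : Type} (G : SimpleGraph V) (u v : V) :
    SimpleGraph {x : V // x ≠ v} :=
  SimpleGraph.fromRel (fun a b =>
    G.Adj a.1 b.1 ∨ (a.1 = u ∧ G.Adj v b.1) ∨ (b.1 = u ∧ G.Adj v a.1))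

/-- `ContractsIn G H n` : `H` is obtained from `G` by exactly `n` edge contractions. -/
inductive ContractsIn : {V : Type} → SimpleGraph V → {W : Type} → SimpleGraph W → ℕ → Prop
  | iso {V : Type} {G : SimpleGraph V} {W : Type} {H : SimpleGraph W} :
      Nonempty (G ≃g H) → ContractsIn G H 0
  | step {V : Type} {G : SimpleGraph V} (u v : V) (huv : G.Adj u v)
      {W : Type} {H : SimpleGraph W} {n : ℕ} :
      ContractsIn (G.contractEdge u v) H n → ContractsIn G H (n + 1)

/-- `G` is contractible to `H`. -/
def ContractibleTo {V W : Type} (G : SimpleGraph V) (H : SimpleGraph W) : Prop :=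
  ∃ n, ContractsIn G H n

/-- `G` is `k`-contractible to `H` : `H` arises from `G` by at most `k` edge contractions. -/
def KContractible {V W : Type} (G : SimpleGraph V) (H : SimpleGraph W) (k : ℕ) : Prop :=
  ∃ n ≤ k, ContractsIn G H n

/-- An `H`-witness structure of `G`. -/
structure IsWitnessStructure {V W : Type} (G : SimpleGraph V) (H : SimpleGraph W)
    (Wit : W → Set V) : Prop where
  connected : ∀ h, (G.induce (Wit h)).Connected
  adj : ∀ h₁ h₂ : W, h₁ ≠ h₂ →
    (H.Adj h₁ h₂ ↔ ∃ a ∈ Wit h₁, ∃ b ∈ Wit h₂, G.Adj a b)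
  cover : ∀ v : V, ∃ h, v ∈ Wit h
  disjoint : ∀ h₁ h₂ : W, h₁ ≠ h₂ → Disjoint (Wit h₁) (Wit h₂)

/-- `P` is a path graph. -/
def IsPathGraph {W : Type} (P : SimpleGraph W) : Prop :=
  ∃ n, Nonempty (P ≃g SimpleGraph.pathGraph n)

/-- `C` is a cycle graph (on at least 3 vertices). -/
def IsCycleGraph {W : Type} (C : SimpleGraph W) : Prop :=
  ∃ n, 3 ≤ n ∧ Nonempty (C ≃g SimpleGraph.cycleGraph n)

/-- `G` is 2-edge-connected. -/
def TwoEdgeConnected {V : Type} (G : SimpleGraph V) : Prop :=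
  G.Connected ∧ ∀ e ∈ G.edgeSet, (G.deleteEdges {e}).Connected

/-- `G` is 2-connected. -/
def TwoConnected {V : Type} (G : SimpleGraph V) : Prop :=
  G.Connected ∧ 3 ≤ Nat.card V ∧ ∀ v : V, (G.induce {u | u ≠ v}).Connected

/-- `C₁` and `C₂` are (exactly the) two connected components of `G - {x, y}`. -/
def TwoComponents {V : Type} (G : SimpleGraph V) (x y : V) (C₁ C₂ : Set V) : Prop :=
  Disjoint C₁ C₂ ∧ C₁ ∪ C₂ = {v | v ≠ x ∧ v ≠ y} ∧
  C₁.Nonempty ∧ C₂.Nonempty ∧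
  (G.induce C₁).Connected ∧ (G.induce C₂).Connected ∧
  ∀ a ∈ C₁, ∀ b ∈ C₂, ¬ G.Adj a b

/-- `C` is an optimal (longest) cycle to which `G` can be contracted. -/
def OptimalCycle {V W : Type} (G : SimpleGraph V) (C : SimpleGraph W) : Prop :=
  IsCycleGraph C ∧ ContractibleTo G C ∧
  ∀ (W' : Type) (C' : SimpleGraph W'), IsCycleGraph C' → ContractibleTo G C' →
    Nat.card W' ≤ Nat.card W

/-- `G` can be contracted to a path, with `a` in one endpoint witness set and `b` in
the other, using at most `k` edge contractions. -/
def PathContractFixed {V : Type} (G : SimpleGraph V) (a b : V) (k : ℕ) : Prop :=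
  ∃ (n : ℕ) (Wit : Fin (n + 1) → Set V),
    IsWitnessStructure G (SimpleGraph.pathGraph (n + 1)) Wit ∧
    Nat.card V ≤ (n + 1) + k ∧
    ((a ∈ Wit 0 ∧ b ∈ Wit (Fin.last n)) ∨ (a ∈ Wit (Fin.last n) ∧ b ∈ Wit 0))

/-!
A contraction sequence of length at most `k` onto `P` yields witness sets whose sizes exceed one
by at most `k` in total, so no witness set contains all `k + 2` vertices of a pendant path. The
witness set of the leaf is connected, hence an initial segment of its pendant path, and only one
edge leaves it; so it has a single neighbour in `P` and is an end of `P`. The witness sets of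
`u'` and `v'` differ because the one of `u'` lies inside the first pendant path.
-/

variable {V W : Type} {G : SimpleGraph V} {H : SimpleGraph W}

theorem Nat.card_eq_card_subtype_ne_add_one [Finite V] (v : V) :
    Nat.card V = Nat.card {x // x ≠ v} + 1 := by
  classical
  have := Fintype.ofFinite V
  simp only [Nat.card_eq_fintype_card, ne_eq, Fintype.card_subtype_compl, Fintype.card_subtype_eq]
  have := Fintype.card_pos_iff.2 ⟨v⟩
  omega

theorem ContractsIn.card_eq {n : ℕ} [Finite V] (h : ContractsIn G H n) :
    Nat.card V = Nat.card W + n := by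
  revert ‹Finite V›
  induction h with
  | iso h => exact Nat.card_congr h.some.toEquiv
  | step _ v _ _ ih =>
    intro
    rw [← add_assoc, ← ih, Nat.card_eq_card_subtype_ne_add_one v]

theorem KContractible.card_le {k : ℕ} [Finite V] (h : KContractible G H k) :
    Nat.card V ≤ Nat.card W + k := by
  obtain ⟨n, hn, hc⟩ := h
  rw [hc.card_eq]
  omega

namespace IsWitnessStructure

variable {Wit : W → Set V}

theorem eq_of_mem_of_mem (hW : IsWitnessStructure G H Wit) {x : V} {a b : W}
    (ha : x ∈ Wit a) (hb : x ∈ Wit b) : a = b :=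
  by_contra fun hne => Set.disjoint_left.1 (hW.disjoint a b hne) ha hb

theorem mem_of_adj_of_forall_adj_eq (hW : IsWitnessStructure G H Wit) {s h : W} {y₀ : V}
    (hexit : ∀ x ∈ Wit s, ∀ y, G.Adj x y → y ∉ Wit s → y = y₀) (hadj : H.Adj s h) :
    y₀ ∈ Wit h := by
  obtain ⟨x, hx, y, hy, hxy⟩ := (hW.adj s h hadj.ne).1 hadj
  have hys : y ∉ Wit s := fun hys => hadj.ne (hW.eq_of_mem_of_mem hys hy)
  rwa [← hexit x hx y hxy hys]

theorem nonempty (hW : IsWitnessStructure G H Wit) (h : W) : (Wit h).Nonempty :=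
  Set.nonempty_coe_sort.1 (hW.connected h).nonempty

open Finset in
theorem ncard_add_card_le [Finite V] [Finite W] (hW : IsWitnessStructure G H Wit) (s : W) :
    (Wit s).ncard + Nat.card W ≤ Nat.card V + 1 := by
  classical
  have := Fintype.ofFinite V
  have := Fintype.ofFinite W
  have hpair : ((univ : Finset W) : Set W).PairwiseDisjoint fun h => (Wit h).toFinset :=
    fun h₁ _ h₂ _ hne => Set.disjoint_toFinset.2 (hW.disjoint h₁ h₂ hne)
  have hsum : ∑ h, #(Wit h).toFinset ≤ Fintype.card V := by
    rw [← card_biUnion hpair]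
    exact card_le_univ _
  have hothers : #(univ.erase s) ≤ ∑ h ∈ univ.erase s, #(Wit h).toFinset := by
    rw [card_eq_sum_ones]
    exact sum_le_sum fun h _ => (Set.toFinset_nonempty.2 (hW.nonempty h)).card_pos
  rw [← add_sum_erase _ _ (mem_univ s)] at hsum
  rw [card_erase_of_mem (mem_univ s), card_univ] at hothers
  rw [Set.ncard_eq_toFinset_card', Nat.card_eq_fintype_card, Nat.card_eq_fintype_card]
  have := Fintype.card_pos_iff.2 ⟨s⟩
  omega

end IsWitnessStructure

namespace SimpleGraph

theorem pathGraph_eq_zero_or_eq_last_of_adj_unique {n : ℕ} {s : Fin (n + 1)}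
    (h : ∀ h₁ h₂, (pathGraph (n + 1)).Adj s h₁ → (pathGraph (n + 1)).Adj s h₂ → h₁ = h₂) :
    s = 0 ∨ s = Fin.last n := by
  by_contra! hs
  have hs₀ : s.val ≠ 0 := fun h => hs.1 (Fin.ext h)
  have hsn : s.val ≠ n := fun h => hs.2 (Fin.ext h)
  have := h ⟨s - 1, by omega⟩ ⟨s + 1, by omega⟩ (by rw [pathGraph_adj]; simp; omega)
    (by rw [pathGraph_adj]; simp)
  simp [Fin.ext_iff] at this

/-- Indexed by `ℕ` to avoid `Fin` arithmetic; at `j = 0` the alternative `x = P (0 - 1) = P 0`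
is void since `G` is loopless. -/
structure IsPendantPath (G : SimpleGraph V) (P : ℕ → V) (m : ℕ) : Prop where
  injOn : Set.InjOn P (Set.Iic m)
  eq_or_eq_of_adj : ∀ j < m, ∀ x, G.Adj (P j) x → x = P (j - 1) ∨ x = P (j + 1)

theorem isPendantPath_of_neighborSet_card {m : ℕ} {p : Fin (m + 1) → V}
    (hp : Function.Injective p) (hadj : ∀ i : Fin m, G.Adj (p i.castSucc) (p i.succ))
    (h₀ : Nat.card (G.neighborSet (p 0)) = 1)
    (hint : ∀ i, i ≠ 0 → i ≠ Fin.last m → Nat.card (G.neighborSet (p i)) = 2) :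
    G.IsPendantPath (fun j => p (Fin.clamp j m)) m := by
  have hclamp : ∀ j (hj : j ≤ m), Fin.clamp j m = ⟨j, by omega⟩ := fun j hj =>
    Fin.ext (by simp [hj])
  refine ⟨fun i hi j hj he => ?_, fun j hj x hx => ?_⟩
  · simpa [hclamp i hi, hclamp j hj] using hp he
  have hnext : G.Adj (p (Fin.clamp j m)) (p (Fin.clamp (j + 1) m)) := by
    simpa [hclamp j hj.le, hclamp (j + 1) hj] using hadj ⟨j, hj⟩
  obtain rfl | hj₀ := Nat.eq_zero_or_pos j
  · obtain ⟨y, hy⟩ := Set.ncard_eq_one.1 ((Nat.card_coe_set_eq _).symm.trans h₀)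
    have h₁ : p (Fin.clamp 1 m) ∈ G.neighborSet (p 0) := hnext
    have hx : x ∈ G.neighborSet (p 0) := hx
    rw [hy, Set.mem_singleton_iff] at h₁ hx
    exact .inr (hx.trans h₁.symm)
  · have hprev : G.Adj (p (Fin.clamp j m)) (p (Fin.clamp (j - 1) m)) := by
      convert (hadj ⟨j - 1, by omega⟩).symm using 2 <;> ext <;> simp <;> omega
    have hne : p (Fin.clamp (j - 1) m) ≠ p (Fin.clamp (j + 1) m) := fun he => by
      simpa [hclamp _ hj, hclamp (j - 1) (by omega)] using hp he
    have hdeg := hint (Fin.clamp j m) (by simp [Fin.ext_iff]; omega)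
      (by simp [Fin.ext_iff]; omega)
    rw [Nat.card_coe_set_eq] at hdeg
    have hnbr : {p (Fin.clamp (j - 1) m), p (Fin.clamp (j + 1) m)} =
        G.neighborSet (p (Fin.clamp j m)) :=
      Set.eq_of_subset_of_ncard_le
        (Set.insert_subset_iff.2 ⟨hprev, Set.singleton_subset_iff.2 hnext⟩)
        (by rw [hdeg, Set.ncard_pair hne]) (Set.finite_of_ncard_ne_zero (by omega))
    have hx : x ∈ G.neighborSet (p (Fin.clamp j m)) := hx
    rwa [← hnbr] at hx

variable {P : ℕ → V} {m a : ℕ} {S : Set V}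

theorem IsPendantPath.subset_image_Iic (hP : G.IsPendantPath P m) (hS : (G.induce S).Connected)
    (h₀ : P 0 ∈ S) (ha : a < m) (hout : P (a + 1) ∉ S) : S ⊆ P '' Set.Iic a := by
  intro y hy
  by_contra hya
  obtain ⟨d, -, hd, hd'⟩ := ((hS.preconnected ⟨P 0, h₀⟩ ⟨y, hy⟩).some).exists_boundary_dart
    {z | z.1 ∈ P '' Set.Iic a} ⟨0, Nat.zero_le a, rfl⟩ hya
  obtain ⟨j, hj, hdj⟩ := hd
  have hj : j ≤ a := hj
  have hadj : G.Adj (P j) d.snd := hdj ▸ d.adj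
  rcases hP.eq_or_eq_of_adj j (by omega) _ hadj with he | he
  · exact hd' ⟨j - 1, by simp only [Set.mem_Iic]; omega, he.symm⟩
  · obtain rfl | hja := eq_or_lt_of_le hj
    · exact hout (he ▸ d.snd.2)
    · exact hd' ⟨j + 1, hja, he.symm⟩

theorem IsPendantPath.eq_of_adj_of_notMem (hP : G.IsPendantPath P m) (ha : a < m)
    (hsub : S ⊆ P '' Set.Iic a) (hin : ∀ j ≤ a, P j ∈ S) {x y : V} (hx : x ∈ S) (hxy : G.Adj x y)
    (hy : y ∉ S) : y = P (a + 1) := by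
  obtain ⟨j, hj, rfl⟩ := hsub hx
  have hj : j ≤ a := hj
  rcases hP.eq_or_eq_of_adj j (by omega) y hxy with rfl | rfl
  · exact absurd (hin _ (by omega)) hy
  · obtain rfl | hja := eq_or_lt_of_le hj
    · rfl
    · exact absurd (hin _ hja) hy

end SimpleGraph

theorem IsWitnessStructure.adj_subsingleton_of_isPendantPath [Finite V] [Finite W]
    {Wit : W → Set V} {P : ℕ → V} {k : ℕ} {s : W} (hW : IsWitnessStructure G H Wit)
    (hcard : Nat.card V ≤ Nat.card W + k) (hP : G.IsPendantPath P (k + 1)) (hs : P 0 ∈ Wit s) :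
    (∀ h₁ h₂, H.Adj s h₁ → H.Adj s h₂ → h₁ = h₂) ∧ Wit s ⊆ P '' Set.Iic k := by
  have hleave : ∃ a, a ≤ k ∧ P (a + 1) ∉ Wit s := by
    by_contra! hall
    have hsub : P '' Set.Iic (k + 1) ⊆ Wit s := by
      rintro _ ⟨j, hj, rfl⟩
      cases j with
      | zero => exact hs
      | succ j => exact hall j (Nat.le_of_succ_le_succ hj)
    have hcardP : (P '' Set.Iic (k + 1)).ncard = k + 2 := by
      rw [hP.injOn.ncard_image, ← Finset.coe_Iic, Set.ncard_coe_finset, Nat.card_Iic]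
    have := Set.ncard_le_ncard hsub (Set.toFinite _)
    have := hW.ncard_add_card_le s
    omega
  classical
  obtain ⟨hak, hout⟩ := Nat.find_spec hleave
  set a := Nat.find hleave
  have hin : ∀ j ≤ a, P j ∈ Wit s := by
    rintro (_ | j) hj
    · exact hs
    · by_contra hj'
      exact Nat.find_min hleave (Nat.lt_of_succ_le hj) ⟨by omega, hj'⟩
  have hsub := hP.subset_image_Iic (hW.connected s) hs (by omega) hout
  have hexit : ∀ x ∈ Wit s, ∀ y, G.Adj x y → y ∉ Wit s → y = P (a + 1) :=
    fun _ hx _ hxy hy => hP.eq_of_adj_of_notMem (by omega) hsub hin hx hxy hy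
  refine ⟨fun h₁ h₂ h₁s h₂s => ?_, hsub.trans (Set.image_mono (Set.Iic_subset_Iic.2 hak))⟩
  exact hW.eq_of_mem_of_mem (hW.mem_of_adj_of_forall_adj_eq hexit h₁s)
    (hW.mem_of_adj_of_forall_adj_eq hexit h₂s)

theorem stmt16_general {VH : Type} [Finite VH] (H : SimpleGraph VH)
    (k : ℕ) (u' v' : VH) (p q : Fin (k + 2) → VH)
    (hp : Function.Injective p) (hq : Function.Injective q)
    (hpq : ∀ i j, p i ≠ q j)
    (hp0 : p 0 = u')
    (hq0 : q 0 = v')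
    (hpadj : ∀ i : Fin (k + 1), H.Adj (p i.castSucc) (p i.succ))
    (hqadj : ∀ i : Fin (k + 1), H.Adj (q i.castSucc) (q i.succ))
    (hu' : Nat.card (H.neighborSet u') = 1)
    (hv' : Nat.card (H.neighborSet v') = 1)
    (hpint : ∀ i : Fin (k + 2), i ≠ 0 → i ≠ Fin.last (k + 1) →
      Nat.card (H.neighborSet (p i)) = 2)
    (hqint : ∀ i : Fin (k + 2), i ≠ 0 → i ≠ Fin.last (k + 1) →
      Nat.card (H.neighborSet (q i)) = 2)
    (n : ℕ) (hk : KContractible H (SimpleGraph.pathGraph (n + 1)) k)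
    (Wit : Fin (n + 1) → Set VH)
    (hW : IsWitnessStructure H (SimpleGraph.pathGraph (n + 1)) Wit) :
    (u' ∈ Wit 0 ∧ v' ∈ Wit (Fin.last n)) ∨
      (u' ∈ Wit (Fin.last n) ∧ v' ∈ Wit 0) := by
  subst hp0 hq0
  have hcard := hk.card_le
  obtain ⟨sp, hsp⟩ := hW.cover (p 0)
  obtain ⟨sq, hsq⟩ := hW.cover (q 0)
  obtain ⟨hp_end, hp_sub⟩ := hW.adj_subsingleton_of_isPendantPath hcard
    (isPendantPath_of_neighborSet_card hp hpadj hu' hpint) hsp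
  obtain ⟨hq_end, -⟩ := hW.adj_subsingleton_of_isPendantPath hcard
    (isPendantPath_of_neighborSet_card hq hqadj hv' hqint) hsq
  have hne : sp ≠ sq := by
    rintro rfl
    obtain ⟨j, -, hj⟩ := hp_sub hsq
    exact hpq _ _ hj
  rcases pathGraph_eq_zero_or_eq_last_of_adj_unique hp_end with rfl | rfl <;>
    rcases pathGraph_eq_zero_or_eq_last_of_adj_unique hq_end with rfl | rfl
  · exact absurd rfl hne
  · exact .inl ⟨hsp, hsq⟩
  · exact .inr ⟨hsp, hsq⟩
  · exact absurd rfl hne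

/-- If a connected graph `H` contains two (disjoint) pendant paths
`p : u' — … — u` and `q : v' — … — v`, each of length `k + 1`, with `u'`, `v'` of
degree 1 and all internal vertices of degree 2, and `H` is `k`-contractible to a path,
then the witness sets containing `u'` and `v'` correspond to the two endvertices of
the path. -/
theorem stmt16 {VH : Type} [Finite VH] (H : SimpleGraph VH) (hconn : H.Connected)
    (k : ℕ) (u u' v v' : VH) (p q : Fin (k + 2) → VH)
    (hp : Function.Injective p) (hq : Function.Injective q)
    (hpq : ∀ i j, p i ≠ q j)
    (hp0 : p 0 = u') (hpl : p (Fin.last (k + 1)) = u)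
    (hq0 : q 0 = v') (hql : q (Fin.last (k + 1)) = v)
    (hpadj : ∀ i : Fin (k + 1), H.Adj (p i.castSucc) (p i.succ))
    (hqadj : ∀ i : Fin (k + 1), H.Adj (q i.castSucc) (q i.succ))
    (hu' : Nat.card (H.neighborSet u') = 1)
    (hv' : Nat.card (H.neighborSet v') = 1)
    (hpint : ∀ i : Fin (k + 2), i ≠ 0 → i ≠ Fin.last (k + 1) →
      Nat.card (H.neighborSet (p i)) = 2)
    (hqint : ∀ i : Fin (k + 2), i ≠ 0 → i ≠ Fin.last (k + 1) →
      Nat.card (H.neighborSet (q i)) = 2)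
    (n : ℕ) (hk : KContractible H (SimpleGraph.pathGraph (n + 1)) k)
    (Wit : Fin (n + 1) → Set VH)
    (hW : IsWitnessStructure H (SimpleGraph.pathGraph (n + 1)) Wit) :
    (u' ∈ Wit 0 ∧ v' ∈ Wit (Fin.last n)) ∨
      (u' ∈ Wit (Fin.last n) ∧ v' ∈ Wit 0) :=
  stmt16_general H k u' v' p q hp hq hpq hp0 hq0 hpadj hqadj hu' hv' hpint hqint n hk Wit hW
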